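/- Let λ be a partition of n, q an admissible label for λ, and (X,w) = (J_λ, w_q) the standard representative of type λ[q]. Then the k-dimension of the subspace im(X) + {Yw : Y ∈ glₙ(k), YX = XY} of kⁿ equals n − q. -/

import Mathlib

open Matrix MvPolynomial

/-- The data of a partition `λ = (a₁ ≥ ⋯ ≥ a_t > 0)` of `n` (recorded as an antitone
function `a : ℕ → ℕ`, zero outside `[0, t)`, so that `a (i-1)` is the `i`-th part),
together with a nilpotent matrix `X` and Jordan generators `v 0, …, v (t-1)` for it:
`X ^ (a i) *ᵥ v i = 0` and the family `{X ^ j *ᵥ v i : i < t, j < a i}` is a basis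
of `kⁿ`. -/
structure JordanData (k : Type*) [Field k] (n : ℕ) where
  t : ℕ
  a : ℕ → ℕ
  anti : Antitone a
  pos_iff : ∀ i, a i ≠ 0 ↔ i < t
  sum_eq : ∑ i ∈ Finset.range t, a i = n
  X : Matrix (Fin n) (Fin n) k
  v : ℕ → Fin n → k
  kill : ∀ i < t, (X ^ a i) *ᵥ v i = 0
  basis_indep : LinearIndependent k
    (fun p : Σ i : Fin t, Fin (a i.val) => (X ^ p.2.val) *ᵥ v p.1.val)
  basis_span : Submodule.span k
    (Set.range (fun p : Σ i : Fin t, Fin (a i.val) => (X ^ p.2.val) *ᵥ v p.1.val)) = ⊤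

namespace JordanData
variable {k : Type*} [Field k] {n : ℕ} (D : JordanData k n)

noncomputable def bas : Module.Basis (Σ i : Fin D.t, Fin (D.a i.val)) k (Fin n → k) :=
  Module.Basis.mk D.basis_indep (by rw [D.basis_span])

lemma bas_apply (p : Σ i : Fin D.t, Fin (D.a i.val)) :
    D.bas p = (D.X ^ p.2.val) *ᵥ D.v p.1.val := Module.Basis.mk_apply _ _ p


lemma sigma_ext {r p : Σ i : Fin D.t, Fin (D.a i.val)} (h1 : r.1.val = p.1.val)
    (h2 : r.2.val = p.2.val) : r = p := by
  obtain ⟨⟨i1, hi1⟩, ⟨j1, hj1⟩⟩ := r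
  obtain ⟨⟨i0, hi0⟩, ⟨j0, hj0⟩⟩ := p
  simp only at h1 h2
  subst h1; subst h2; rfl

lemma kill' {i j : ℕ} (hi : i < D.t) (hj : D.a i ≤ j) : (D.X ^ j) *ᵥ D.v i = 0 := by
  rw [show j = (j - D.a i) + D.a i from (Nat.sub_add_cancel hj).symm, pow_add,
    ← Matrix.mulVec_mulVec, D.kill i hi, Matrix.mulVec_zero]

lemma exists_comm (i m : ℕ) (hi : i < D.t) (hm : m < D.t) (him : D.a i ≤ D.a m) :
    ∃ Y : Matrix (Fin n) (Fin n) k, Y * D.X = D.X * Y ∧ D.v i = Y *ᵥ D.v m := by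
  classical
  set L : (Fin n → k) →ₗ[k] (Fin n → k) :=
    D.bas.constr k (fun p => if p.1.val = m then (D.X ^ p.2.val) *ᵥ D.v i else 0) with hL
  have hLb : ∀ p : Σ i : Fin D.t, Fin (D.a i.val),
      L (D.bas p) = if p.1.val = m then (D.X ^ p.2.val) *ᵥ D.v i else 0 := fun p =>
    Module.Basis.constr_basis _ _ _ _
  refine ⟨LinearMap.toMatrix' L, ?_, ?_⟩
  · have hcomm : L ∘ₗ Matrix.toLin' D.X = Matrix.toLin' D.X ∘ₗ L := by
      apply D.bas.ext
      intro r
      rw [LinearMap.comp_apply, LinearMap.comp_apply, Matrix.toLin'_apply,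
        Matrix.toLin'_apply, hLb r, D.bas_apply r, Matrix.mulVec_mulVec, ← pow_succ']
      by_cases hj1 : r.2.val + 1 < D.a r.1.val
      · have hb : D.bas ⟨r.1, ⟨r.2.val + 1, hj1⟩⟩ = (D.X ^ (r.2.val + 1)) *ᵥ D.v r.1.val :=
          D.bas_apply ⟨r.1, ⟨r.2.val + 1, hj1⟩⟩
        rw [← hb, hLb ⟨r.1, ⟨r.2.val + 1, hj1⟩⟩]
        by_cases hi' : r.1.val = m
        · simp [hi', Matrix.mulVec_mulVec, ← pow_succ']
        · simp [hi']
      · have hj2 : D.a r.1.val ≤ r.2.val + 1 := le_of_not_gt hj1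
        rw [D.kill' r.1.2 hj2, map_zero]
        by_cases hi' : r.1.val = m
        · simp only [hi', if_pos]
          rw [Matrix.mulVec_mulVec, ← pow_succ']
          refine (D.kill' hi ?_).symm
          have : D.a r.1.val = D.a m := by rw [hi']
          omega
        · simp [hi']
    have h2 := congrArg LinearMap.toMatrix' hcomm
    rwa [LinearMap.toMatrix'_comp, LinearMap.toMatrix'_comp,
      LinearMap.toMatrix'_toLin'] at h2
  · have hpos : 0 < D.a m := Nat.pos_of_ne_zero ((D.pos_iff m).2 hm)
    have hvm : D.v m = D.bas ⟨⟨m, hm⟩, ⟨0, hpos⟩⟩ := by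
      rw [D.bas_apply ⟨⟨m, hm⟩, ⟨0, hpos⟩⟩]; simp
    have h3 : (LinearMap.toMatrix' L) *ᵥ D.v m = L (D.v m) := by
      rw [← Matrix.toLin'_apply, Matrix.toLin'_toMatrix']
    rw [h3, hvm, hLb ⟨⟨m, hm⟩, ⟨0, hpos⟩⟩]
    simp

lemma repr_zero_of (M : Matrix (Fin n) (Fin n) k) (p : Σ i : Fin D.t, Fin (D.a i.val))
    (h : ∀ p', (D.bas.repr (M *ᵥ D.bas p')) p = 0) (u : Fin n → k) :
    (D.bas.repr (M *ᵥ u)) p = 0 := by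
  have key : (Finsupp.lapply p ∘ₗ (D.bas.repr.toLinearMap ∘ₗ Matrix.toLin' M))
      = (0 : (Fin n → k) →ₗ[k] k) := by
    apply D.bas.ext
    intro p'
    simpa using h p'
  simpa using LinearMap.congr_fun key u

lemma mem_span_of_ker (m : ℕ) (u : Fin n → k) (hu : (D.X ^ D.a m) *ᵥ u = 0) :
    u ∈ Submodule.span k
      (⇑D.bas '' {p : Σ i : Fin D.t, Fin (D.a i.val) | D.a p.1.val ≤ p.2.val + D.a m}) := by
  classical
  rw [Module.Basis.mem_span_image]
  intro p hp
  by_contra hnot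
  simp only [Set.mem_setOf_eq, not_le] at hnot
  set p' : Σ i : Fin D.t, Fin (D.a i.val) := ⟨p.1, ⟨p.2.val + D.a m, hnot⟩⟩ with hp'
  have claim : (Finsupp.lapply p' ∘ₗ (D.bas.repr.toLinearMap ∘ₗ Matrix.toLin' (D.X ^ D.a m)))
      = (Finsupp.lapply p ∘ₗ D.bas.repr.toLinearMap) := by
    apply D.bas.ext
    intro r
    simp only [LinearMap.comp_apply, Matrix.toLin'_apply, LinearEquiv.coe_toLinearMap,
      Finsupp.lapply_apply]
    rw [D.bas_apply r, Matrix.mulVec_mulVec, ← pow_add,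
      show D.a m + r.2.val = r.2.val + D.a m from Nat.add_comm _ _]
    by_cases hcase : r.2.val + D.a m < D.a r.1.val
    · have hb : D.bas ⟨r.1, ⟨r.2.val + D.a m, hcase⟩⟩
          = (D.X ^ (r.2.val + D.a m)) *ᵥ D.v r.1.val := D.bas_apply _
      rw [← hb, ← D.bas_apply r, Module.Basis.repr_self, Module.Basis.repr_self,
        Finsupp.single_apply, Finsupp.single_apply]
      by_cases he : r = p
      · subst he
        simp [hp']
      · rw [if_neg, if_neg he]
        intro hcon
        apply he
        rw [hp'] at hcon
        have h1 := congrArg (fun x : Σ i : Fin D.t, Fin (D.a i.val) => x.1.val) hcon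
        have h2 := congrArg (fun x : Σ i : Fin D.t, Fin (D.a i.val) => x.2.val) hcon
        simp only at h1 h2
        exact D.sigma_ext h1 (by omega)
    · rw [D.kill' r.1.2 (le_of_not_gt hcase), map_zero, Finsupp.zero_apply,
        ← D.bas_apply r, Module.Basis.repr_self, Finsupp.single_apply]
      rw [if_neg]
      intro hcon
      rw [hcon] at hcase
      exact hcase hnot
  have hfin := LinearMap.congr_fun claim u
  simp only [LinearMap.comp_apply, Matrix.toLin'_apply, LinearEquiv.coe_toLinearMap,
    Finsupp.lapply_apply, hu, map_zero, Finsupp.zero_apply] at hfin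
  exact (Finsupp.mem_support_iff.1 hp) hfin.symm

lemma mulVec_mem_span (q : ℕ) (u : Fin n → k) :
    D.X *ᵥ u ∈ Submodule.span k
      (⇑D.bas '' {p : Σ i : Fin D.t, Fin (D.a i.val) | 1 ≤ p.2.val ∨ q ≤ p.1.val}) := by
  classical
  rw [Module.Basis.mem_span_image]
  intro p hp
  by_contra hnp
  simp only [Set.mem_setOf_eq, not_or, not_le] at hnp
  have hz : ∀ r, (D.bas.repr (D.X *ᵥ D.bas r)) p = 0 := by
    intro r
    rw [D.bas_apply r, Matrix.mulVec_mulVec, ← pow_succ']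
    by_cases hj1 : r.2.val + 1 < D.a r.1.val
    · have hb : D.bas ⟨r.1, ⟨r.2.val + 1, hj1⟩⟩ = (D.X ^ (r.2.val + 1)) *ᵥ D.v r.1.val :=
        D.bas_apply ⟨r.1, ⟨r.2.val + 1, hj1⟩⟩
      rw [← hb, Module.Basis.repr_self, Finsupp.single_apply, if_neg]
      intro hcon
      have h2 := congrArg (fun x : Σ i : Fin D.t, Fin (D.a i.val) => x.2.val) hcon
      simp only at h2
      omega
    · rw [D.kill' r.1.2 (le_of_not_gt hj1), map_zero, Finsupp.zero_apply]
  exact Finsupp.mem_support_iff.1 hp (D.repr_zero_of D.X p hz u)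

end JordanData

/-- `q` is an admissible label for the partition: `q = t` or `q = d₁ + ⋯ + d_{j-1}` for
some `j ≤ r`, i.e. `q < t` and `q` is the first (0-based) index of its block of equal
parts. -/
def JordanData.Admissible {k : Type*} [Field k] {n : ℕ} (D : JordanData k n) (q : ℕ) :
    Prop :=
  q = D.t ∨ (q < D.t ∧ ∀ i < q, D.a q < D.a i)

/-- `w` is the vector of the standard representative `(J_λ, w_q)` of type `λ[q]`:
for `q = t` it is `0`, and for `q < t` it is `u_j = v_{d₁+⋯+d_j}`, the Jordan generator
indexed (0-based) by the last index `m` of the block of parts equal to `a q`. -/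
def JordanData.StdVec {k : Type*} [Field k] {n : ℕ} (D : JordanData k n) (q : ℕ)
    (w : Fin n → k) : Prop :=
  (q = D.t ∧ w = 0) ∨
  (q < D.t ∧ ∃ m, m < D.t ∧ D.a m = D.a q ∧ (∀ i < D.t, D.a i = D.a q → i ≤ m) ∧
    w = D.v m)

/-- The `Ad(Ḡ)`-orbit of a point `(X, w)` of `glₙ(k) × kⁿ` under the enhanced group
`Ḡ = GLₙ(k) ⋉ kⁿ`, where `Ad(g,v)(X,w) = (gXg⁻¹, −(gXg⁻¹)v + gw)`. -/
def enhOrbit {k : Type*} [Field k] {n : ℕ}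
    (p : Matrix (Fin n) (Fin n) k × (Fin n → k)) :
    Set (Matrix (Fin n) (Fin n) k × (Fin n → k)) :=
  { y | ∃ g : (Matrix (Fin n) (Fin n) k)ˣ, ∃ u : Fin n → k,
      y.1 = g.val * p.1 * (g⁻¹).val ∧
      y.2 = -((g.val * p.1 * (g⁻¹).val) *ᵥ u) + g.val *ᵥ p.2 }

/-- For the standard representative `(X, w) = (J_λ, w_q)` of type
`λ[q]`, the subspace `im(X) + {Yw : Y ∈ glₙ(k), YX = XY}` of `kⁿ` has dimension
`n − q`. -/
theorem dim_M_eq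
    {k : Type*} [Field k] [IsAlgClosed k] {n : ℕ} (hn : 1 ≤ n)
    (D : JordanData k n) (q : ℕ) (hq : D.Admissible q)
    (w : Fin n → k) (hw : D.StdVec q w) :
    Module.finrank k
      ↥(LinearMap.range D.X.mulVecLin ⊔
        Submodule.span k
          { u : Fin n → k | ∃ Y : Matrix (Fin n) (Fin n) k, Y * D.X = D.X * Y ∧ u = Y *ᵥ w })
      = n - q := by
  classical
  have hqt : q ≤ D.t := by
    rcases hq with h | ⟨h, _⟩
    · exact le_of_eq h
    · exact le_of_lt h
  set S : Submodule k (Fin n → k) := Submodule.span k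
    (⇑D.bas '' {p : Σ i : Fin D.t, Fin (D.a i.val) | 1 ≤ p.2.val ∨ q ≤ p.1.val}) with hS
  -- range X ≤ S
  have hrange : LinearMap.range D.X.mulVecLin ≤ S := by
    rintro x hx
    obtain ⟨u, rfl⟩ := hx
    rw [Matrix.mulVecLin_apply]
    exact D.mulVec_mem_span q u
  -- the Y-set is contained in S
  have hYsub : {u : Fin n → k | ∃ Y : Matrix (Fin n) (Fin n) k,
      Y * D.X = D.X * Y ∧ u = Y *ᵥ w} ⊆ (S : Set (Fin n → k)) := by
    rintro u ⟨Y, hcY, rfl⟩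
    rcases hw with ⟨hqt', rfl⟩ | ⟨hqlt, m, hm, ham, hmax, rfl⟩
    · rw [Matrix.mulVec_zero]
      exact S.zero_mem
    · have hcY' : Commute Y D.X := hcY
      have hker : (D.X ^ D.a m) *ᵥ (Y *ᵥ D.v m) = 0 := by
        rw [Matrix.mulVec_mulVec, ← (hcY'.pow_right (D.a m)).eq, ← Matrix.mulVec_mulVec,
          D.kill m hm, Matrix.mulVec_zero]
      refine Submodule.span_mono (Set.image_mono ?_) (D.mem_span_of_ker m _ hker)
      intro p hp
      simp only [Set.mem_setOf_eq] at hp ⊢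
      by_cases h1 : 1 ≤ p.2.val
      · exact Or.inl h1
      · right
        by_contra hlt
        push_neg at hlt
        rcases hq with h | ⟨_, hstrict⟩
        · omega
        · have := hstrict p.1.val hlt
          omega
  -- S ≤ the sup
  have hrev : S ≤ LinearMap.range D.X.mulVecLin ⊔ Submodule.span k
      {u : Fin n → k | ∃ Y : Matrix (Fin n) (Fin n) k, Y * D.X = D.X * Y ∧ u = Y *ᵥ w} := by
    rw [hS, Submodule.span_le]
    rintro x ⟨p, hp, rfl⟩
    simp only [Set.mem_setOf_eq] at hp
    rcases hp with h1 | h2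
    · apply Submodule.mem_sup_left
      refine ⟨(D.X ^ (p.2.val - 1)) *ᵥ D.v p.1.val, ?_⟩
      rw [Matrix.mulVecLin_apply, Matrix.mulVec_mulVec, ← pow_succ',
        Nat.sub_add_cancel h1]
      exact (D.bas_apply p).symm
    · have hqlt2 : q < D.t := lt_of_le_of_lt h2 p.1.2
      rcases hw with ⟨hqt', -⟩ | ⟨hqlt, m, hm, ham, hmax, hwv⟩
      · omega
      · have hle : D.a p.1.val ≤ D.a m := by
          have := D.anti h2
          omega
        obtain ⟨Y, hYc, hYv⟩ := D.exists_comm p.1.val m p.1.2 hm hle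
        apply Submodule.mem_sup_right
        apply Submodule.subset_span
        refine ⟨D.X ^ p.2.val * Y, ?_, ?_⟩
        · rw [mul_assoc, hYc, ← mul_assoc, ← pow_succ, pow_succ', mul_assoc]
        · rw [hwv, ← Matrix.mulVec_mulVec, ← hYv]
          exact D.bas_apply p
  have key : (LinearMap.range D.X.mulVecLin ⊔ Submodule.span k
      {u : Fin n → k | ∃ Y : Matrix (Fin n) (Fin n) k, Y * D.X = D.X * Y ∧ u = Y *ᵥ w}) = S :=
    le_antisymm (sup_le hrange (Submodule.span_le.2 hYsub)) hrev
  rw [key]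
  -- counting
  have h1 : (⇑D.bas '' {p : Σ i : Fin D.t, Fin (D.a i.val) | 1 ≤ p.2.val ∨ q ≤ p.1.val})
      = Set.range (⇑D.bas ∘ (Subtype.val :
        {p : Σ i : Fin D.t, Fin (D.a i.val) // 1 ≤ p.2.val ∨ q ≤ p.1.val} → _)) := by
    rw [Set.range_comp, Subtype.range_val_subtype]
  rw [hS, h1, finrank_span_eq_card
    (D.bas.linearIndependent.comp Subtype.val Subtype.val_injective)]
  have hcardι : Fintype.card (Σ i : Fin D.t, Fin (D.a i.val)) = n := by
    rw [Fintype.card_sigma]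
    simp only [Fintype.card_fin]
    rw [Fin.sum_univ_eq_sum_range]
    exact D.sum_eq
  have hcompl : Fintype.card {p : Σ i : Fin D.t, Fin (D.a i.val) //
      ¬ (1 ≤ p.2.val ∨ q ≤ p.1.val)} = q := by
    have e : {p : Σ i : Fin D.t, Fin (D.a i.val) // ¬ (1 ≤ p.2.val ∨ q ≤ p.1.val)} ≃ Fin q := by
      refine ⟨fun c => ⟨c.1.1.val, ?_⟩, fun x => ⟨⟨⟨x.val, lt_of_lt_of_le x.2 hqt⟩,
        ⟨0, Nat.pos_of_ne_zero ((D.pos_iff x.val).2 (lt_of_lt_of_le x.2 hqt))⟩⟩, ?_⟩, ?_, ?_⟩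
      · have hc := c.2
        simp only [not_or, not_le] at hc
        exact hc.2
      · simp only [not_or, not_le]
        exact ⟨by omega, x.2⟩
      · intro c
        apply Subtype.ext
        refine D.sigma_ext rfl ?_
        have hc := c.2
        simp only [not_or, not_le] at hc
        simp only
        omega
      · intro x
        exact Fin.ext rfl
    rw [Fintype.card_congr e, Fintype.card_fin]
  have hc2 := Fintype.card_subtype_compl
    (fun p : Σ i : Fin D.t, Fin (D.a i.val) => 1 ≤ p.2.val ∨ q ≤ p.1.val)
  have hc3 := Fintype.card_subtype_le
    (fun p : Σ i : Fin D.t, Fin (D.a i.val) => 1 ≤ p.2.val ∨ q ≤ p.1.val)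
  omega
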